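/- arXiv:1712.06267 — 4 statements merged into one kernel-verified Lean document; each statement's English description precedes it below -/
import Mathlib

section
/- Let M be a good T-manifold (with Killing vector field K of the circle action), let G = ({U_α}, H, B_α, A_{αβ}) be a weak T-invariant gerbe on M, and let (ξ, ∇^ξ) be a T-equivariant Hermitian line bundle with T-invariant connection that is coupled to G on M. Then the equivariant superconnection ∇^ξ − u ι_K + u^{-1} H on ξ is equivariantly flat, i.e. (∇^ξ − u ι_K + u^{-1} H)^2 + u L_K^ξ = 0, where u is a degree-2 indeterminate and L_K^ξ denotes the Lie derivative on ξ-valued forms along K. -/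
/-!
Over each `U_α` the coupling identifies `∇^ξ` with `∇_α = d − (ι_K B_α) ∧ ·`.  There the
Cartan relations give `[∇_α, ι_K] = L_K` (as `ι_K ι_K B_α = 0`), `[∇_α, H ∧ ·] = 0` (as
`dH = ddB_α = 0`) and `∇_α² = −(d ι_K B_α) ∧ · = (ι_K H) ∧ · = [ι_K, H ∧ ·]`, the middle step
being `L_K B_α = 0`; here `[·, ·]` is the graded commutator.  These local identities patch
to `Ω` because the local trivialisations are jointly injective, and the vanishing of the
equivariant curvature is then a formal computation with the coefficients of `u², u, 1, u⁻¹, u⁻²`.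
-/

open LaurentPolynomial

theorem LaurentPolynomial.sq_add_C_mul_T_eq_zero_of_anticomm {R : Type*} [Ring R]
    {a b c l : R} (hbb : b * b = 0) (hcc : c * c = 0) (hac : a * c + c * a = 0)
    (haa : a * a = b * c + c * b) (hab : a * b + b * a = l) :
    (C a - C b * T 1 + C c * T (-1)) ^ 2 + C l * T 1 = 0 := by
  have hca : c * a = -(a * c) := eq_neg_of_add_eq_zero_right hac
  have hC (r : R) : (C r : R[T;T⁻¹]) = AddMonoidAlgebra.single 0 r := rfl
  have hT (n : ℤ) : (T n : R[T;T⁻¹]) = AddMonoidAlgebra.single n 1 := rfl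
  simp only [sq, ← hab, hC, hT, sub_mul, mul_sub, add_mul, mul_add,
    AddMonoidAlgebra.single_mul_single, mul_one, Int.reduceAdd, Int.reduceNeg,
    hbb, hcc, haa, hca, AddMonoidAlgebra.single_add, AddMonoidAlgebra.single_neg,
    AddMonoidAlgebra.single_zero]
  abel

section Intertwiners

variable {R M J : Type*} [Semiring R] [AddCommGroup M] [Module R M]
  {S : J → Type*} [∀ j, AddCommGroup (S j)] [∀ j, Module R (S j)]

def intertwiners (ρ : ∀ j, M →ₗ[R] S j) :
    Subring (Module.End R M × ∀ j, Module.End R (S j)) where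
  carrier := {p | ∀ j, ρ j ∘ₗ p.1 = p.2 j ∘ₗ ρ j}
  mul_mem' {p q} hp hq j := by
    change ρ j ∘ₗ p.1 ∘ₗ q.1 = (p.2 j ∘ₗ q.2 j) ∘ₗ ρ j
    rw [← LinearMap.comp_assoc, hp j, LinearMap.comp_assoc, hq j, LinearMap.comp_assoc]
  one_mem' j := rfl
  add_mem' {p q} hp hq j := by
    change ρ j ∘ₗ (p.1 + q.1) = (p.2 j + q.2 j) ∘ₗ ρ j
    rw [LinearMap.comp_add, LinearMap.add_comp, hp j, hq j]
  zero_mem' j := by simp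
  neg_mem' {p} hp j := by
    change ρ j ∘ₗ (-p.1) = (-p.2 j) ∘ₗ ρ j
    rw [LinearMap.comp_neg, LinearMap.neg_comp, hp j]

theorem mem_intertwiners_of_apply {ρ : ∀ j, M →ₗ[R] S j} {E : Module.End R M}
    {E' : ∀ j, Module.End R (S j)} (h : ∀ j x, ρ j (E x) = E' j (ρ j x)) :
    (E, E') ∈ intertwiners ρ :=
  fun j => LinearMap.ext (h j)

theorem fst_eq_of_mem_intertwiners {ρ : ∀ j, M →ₗ[R] S j}
    (hρ : ∀ x, (∀ j, ρ j x = 0) → x = 0) ⦃p q : Module.End R M × ∀ j, Module.End R (S j)⦄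
    (hp : p ∈ intertwiners ρ) (hq : q ∈ intertwiners ρ) (h : p.2 = q.2) : p.1 = q.1 := by
  ext x
  refine sub_eq_zero.mp (hρ _ fun j => ?_)
  rw [map_sub, sub_eq_zero, ← LinearMap.comp_apply, hp j, ← LinearMap.comp_apply (ρ j), hq j, h]

end Intertwiners

section LocalConnection

variable {R S : Type*} [CommSemiring R] [AddCommGroup S] [Module R S]
  {d i L : Module.End R S} {m : S →ₗ[R] Module.End R S} {B H : S}

variable (d i m B) in
def localConnection : Module.End R S := d - m (i B)

theorem localConnection_mul_add_mul_contraction (hii : i * i = 0) (hcartan : d * i + i * d = L)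
    (hmi : i * m (i B) + m (i B) * i = m (i (i B))) :
    localConnection d i m B * i + i * localConnection d i m B = L := by
  have hiiB : i (i B) = 0 := by rw [← Module.End.mul_apply, hii, LinearMap.zero_apply]
  calc _ = (d * i + i * d) - (i * m (i B) + m (i B) * i) := by
        simp only [localConnection, sub_mul, mul_sub]; abel
    _ = L := by rw [hcartan, hmi, hiiB, map_zero, sub_zero]

theorem localConnection_mul_add_mul_wedge (hdd : d * d = 0) (hHB : H = d B)
    (hmd : d * m H + m H * d = m (d H)) (hmm : m (i B) * m H + m H * m (i B) = 0) :
    localConnection d i m B * m H + m H * localConnection d i m B = 0 := by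
  have hdH : d H = 0 := by rw [hHB, ← Module.End.mul_apply, hdd, LinearMap.zero_apply]
  calc _ = (d * m H + m H * d) - (m (i B) * m H + m H * m (i B)) := by
        simp only [localConnection, sub_mul, mul_sub]; abel
    _ = 0 := by rw [hmd, hmm, hdH, map_zero, sub_zero]

theorem localConnection_mul_self (hdd : d * d = 0) (hcartan : d * i + i * d = L) (hLB : L B = 0)
    (hHB : H = d B) (hmm : m (i B) * m (i B) = 0)
    (hmd : d * m (i B) + m (i B) * d = m (d (i B))) (hmi : i * m H + m H * i = m (i H)) :
    localConnection d i m B * localConnection d i m B = i * m H + m H * i := by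
  have hiH : i H = -d (i B) := by
    rw [hHB, eq_neg_iff_add_eq_zero, add_comm, ← Module.End.mul_apply, ← Module.End.mul_apply,
      ← LinearMap.add_apply, hcartan, hLB]
  calc _ = d * d - (d * m (i B) + m (i B) * d) + m (i B) * m (i B) := by
        simp only [localConnection, sub_mul, mul_sub]; abel
    _ = m (i H) := by rw [hdd, hmm, hmd, hiH, map_neg, zero_sub, add_zero]
    _ = i * m H + m H * i := hmi.symm

end LocalConnection

theorem stmt0_general
    -- the index set of the `𝕋`-invariant cover `{U_α}` of the good `𝕋`-manifold `M`
    (I : Type)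
    -- scalar forms on `M`
    (SM : Type) [AddCommGroup SM] [Module ℂ SM]
    -- scalar forms on `U_α`, `U_{αβ}`, `U_{αβγ}`, with Cartan operators
    (S : I → Type) [∀ α, AddCommGroup (S α)] [∀ α, Module ℂ (S α)]
    (dU ιU LU : ∀ α, Module.End ℂ (S α))
    -- wedge multiplication on `U_α`
    (mU : ∀ α, S α →ₗ[ℂ] Module.End ℂ (S α))
    -- restriction maps
    (resU : ∀ α, SM →ₗ[ℂ] S α)
    -- Cartan calculus on each `U_α`
    (hd2 : ∀ α, dU α * dU α = 0)
    (hι2U : ∀ α, ιU α * ιU α = 0)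
    (hcartanU : ∀ α, dU α * ιU α + ιU α * dU α = LU α)
    /- ===== the gerbe `G = ({U_α}, H, B_α, A_{αβ})` ===== -/
    (H : SM) (B : ∀ α, S α)
    -- `H = dB_α` on `U_α`
    (hHB : ∀ α, resU α H = dU α (B α))
    /- ===== weak `𝕋`-invariance of the gerbe ===== -/
    (hBinv : ∀ α, LU α (B α) = 0)
    /- ===== the coupled `𝕋`-equivariant line bundle `(ξ, ∇^ξ)` ===== -/
    -- `ξ`-valued forms on `M`, with `∇^ξ`, `ι_K`, `L_K^ξ` and the wedge-by-`H` operator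
    (Ω : Type) [AddCommGroup Ω] [Module ℂ Ω]
    (N ι L : Module.End ℂ Ω) (mH : Module.End ℂ Ω)
    -- identification of `ξ`-valued forms over `U_α` with `S α` via the `𝕋`-invariant
    -- local bases `s_α`; the `ρ α` are jointly injective and intertwine `ι_K`, `L_K`
    -- and wedging by `H`
    (ρ : ∀ α, Ω →ₗ[ℂ] S α)
    (hρ_inj : ∀ x : Ω, (∀ α, ρ α x = 0) → x = 0)
    (hρι : ∀ α (x : Ω), ρ α (ι x) = ιU α (ρ α x))
    (hρL : ∀ α (x : Ω), ρ α (L x) = LU α (ρ α x))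
    (hρH : ∀ α (x : Ω), ρ α (mH x) = mU α (resU α H) (ρ α x))
    -- coupling condition (i): in the basis `s_α` the connection 1-form of `∇^ξ` is
    -- `−ι_K B_α`, i.e. `∇^ξ = d − (ι_K B_α) ∧ ·` over `U_α`
    (h_conn : ∀ α (x : Ω), ρ α (N x) = (dU α - mU α (ιU α (B α))) (ρ α x))
    /- ===== graded commutation rules for wedging with the odd local forms ===== -/
    -- rules for the 1-form `ι_K B_α`
    (hm1sq : ∀ α, mU α (ιU α (B α)) * mU α (ιU α (B α)) = 0)
    (hm1d : ∀ α, dU α * mU α (ιU α (B α)) + mU α (ιU α (B α)) * dU α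
        = mU α (dU α (ιU α (B α))))
    (hm1ι : ∀ α, ιU α * mU α (ιU α (B α)) + mU α (ιU α (B α)) * ιU α
        = mU α (ιU α (ιU α (B α))))
    -- rules for the 3-form `H|_{U_α}`
    (hm3sq : ∀ α, mU α (resU α H) * mU α (resU α H) = 0)
    (hm3d : ∀ α, dU α * mU α (resU α H) + mU α (resU α H) * dU α
        = mU α (dU α (resU α H)))
    (hm3ι : ∀ α, ιU α * mU α (resU α H) + mU α (resU α H) * ιU α
        = mU α (ιU α (resU α H)))
    -- the two odd forms anticommute
    (hm13 : ∀ α, mU α (ιU α (B α)) * mU α (resU α H)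
        + mU α (resU α H) * mU α (ιU α (B α)) = 0) :
    /- ===== conclusion: equivariant flatness of `∇^ξ − u ι_K + u⁻¹ H` ===== -/
    (C N - C ι * T 1 + C mH * T (-1)) ^ 2 + C L * T 1 = 0 := by
  have hN : (N, fun α => localConnection (dU α) (ιU α) (mU α) (B α)) ∈ intertwiners ρ :=
    mem_intertwiners_of_apply h_conn
  have hι : (ι, ιU) ∈ intertwiners ρ := mem_intertwiners_of_apply hρι
  have hH : (mH, fun α => mU α (resU α H)) ∈ intertwiners ρ := mem_intertwiners_of_apply hρH
  have hL : (L, LU) ∈ intertwiners ρ := mem_intertwiners_of_apply hρL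
  have transfer := fst_eq_of_mem_intertwiners hρ_inj
  apply sq_add_C_mul_T_eq_zero_of_anticomm
  · exact transfer (mul_mem hι hι) (zero_mem _) (funext hι2U)
  · exact transfer (mul_mem hH hH) (zero_mem _) (funext hm3sq)
  · exact transfer (add_mem (mul_mem hN hH) (mul_mem hH hN)) (zero_mem _) <| funext fun α =>
      localConnection_mul_add_mul_wedge (hd2 α) (hHB α) (hm3d α) (hm13 α)
  · exact transfer (mul_mem hN hN) (add_mem (mul_mem hι hH) (mul_mem hH hι)) <| funext fun α =>
      localConnection_mul_self (hd2 α) (hcartanU α) (hBinv α) (hHB α) (hm1sq α) (hm1d α) (hm3ι α)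
  · exact transfer (add_mem (mul_mem hN hι) (mul_mem hι hN)) hL <| funext fun α =>
      localConnection_mul_add_mul_contraction (hι2U α) (hcartanU α) (hm1ι α)

theorem stmt0
    -- the index set of the `𝕋`-invariant cover `{U_α}` of the good `𝕋`-manifold `M`
    (I : Type)
    -- scalar forms on `M`
    (SM : Type) [AddCommGroup SM] [Module ℂ SM]
    (dM ιM LM : Module.End ℂ SM)
    -- scalar forms on `U_α`, `U_{αβ}`, `U_{αβγ}`, with Cartan operators
    (S : I → Type) [∀ α, AddCommGroup (S α)] [∀ α, Module ℂ (S α)]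
    (dU ιU LU : ∀ α, Module.End ℂ (S α))
    (S2 : I → I → Type) [∀ α β, AddCommGroup (S2 α β)] [∀ α β, Module ℂ (S2 α β)]
    (d2 ι2 L2 : ∀ α β, Module.End ℂ (S2 α β))
    (S3 : I → I → I → Type) [∀ α β γ, AddCommGroup (S3 α β γ)]
    [∀ α β γ, Module ℂ (S3 α β γ)]
    -- wedge multiplication on `U_α`
    (mU : ∀ α, S α →ₗ[ℂ] Module.End ℂ (S α))
    -- restriction maps
    (resU : ∀ α, SM →ₗ[ℂ] S α)
    (rL : ∀ α β, S α →ₗ[ℂ] S2 α β) (rR : ∀ α β, S β →ₗ[ℂ] S2 α β)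
    (r3ab : ∀ α β γ, S2 α β →ₗ[ℂ] S3 α β γ)
    (r3bc : ∀ α β γ, S2 β γ →ₗ[ℂ] S3 α β γ)
    (r3ac : ∀ α β γ, S2 α γ →ₗ[ℂ] S3 α β γ)
    -- points of the double and triple overlaps, with the function-level operations
    (P2 : I → I → Type) (P3 : I → I → I → Type) [∀ α β γ, TopologicalSpace (P3 α β γ)]
    (ι₀2 : ∀ α β, S2 α β →ₗ[ℂ] (P2 α β → ℂ))
    (ι₀3 : ∀ α β γ, S3 α β γ →ₗ[ℂ] (P3 α β γ → ℂ))
    (df3 : ∀ α β γ, (P3 α β γ → ℂ) →ₗ[ℂ] S3 α β γ)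
    (fmul2 : ∀ α β, (P2 α β → ℂ) → S2 α β → S2 α β)
    (fmul3 : ∀ α β γ, (P3 α β γ → ℂ) → S3 α β γ → S3 α β γ)
    -- Cartan calculus on each `U_α`
    (hd2 : ∀ α, dU α * dU α = 0)
    (hι2U : ∀ α, ιU α * ιU α = 0)
    (hcartanU : ∀ α, dU α * ιU α + ιU α * dU α = LU α)
    /- ===== the gerbe `G = ({U_α}, H, B_α, A_{αβ})` ===== -/
    (H : SM) (B : ∀ α, S α) (A : ∀ α β, S2 α β) (Cf : ∀ α β γ, P3 α β γ → ℂ)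
    -- `(1/2πi) H` has integral periods (abstract predicate)
    (IP : SM → Prop) (hIP : IP H)
    -- `H = dB_α` on `U_α`
    (hHB : ∀ α, resU α H = dU α (B α))
    -- `B_α − B_β = dA_{αβ}` on `U_{αβ}`
    (hBA : ∀ α β, rL α β (B α) - rR α β (B β) = d2 α β (A α β))
    -- `A_{αβ} + A_{βγ} − A_{αγ} = d ln C_{αβγ}` with `C_{αβγ}` `U(1)`-valued
    (hCnorm : ∀ α β γ (x : P3 α β γ), ‖Cf α β γ x‖ = 1)
    (hdlnC : ∀ α β γ, fmul3 α β γ (Cf α β γ)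
        (r3ab α β γ (A α β) + r3bc α β γ (A β γ) - r3ac α β γ (A α γ))
      = df3 α β γ (Cf α β γ))
    /- ===== weak `𝕋`-invariance of the gerbe ===== -/
    (hHinv : LM H = 0)
    (hBinv : ∀ α, LU α (B α) = 0)
    (hAinv : ∀ α β, L2 α β (A α β) = 0)
    -- `ι_K A_{αβ} + ι_K A_{βγ} − ι_K A_{αγ}` takes values in `2πi·ℤ` on each connected
    -- component of `U_{αβγ}`
    (hweak : ∀ α β γ (x : P3 α β γ), ∃ n : ℤ, ∀ y ∈ connectedComponent x,
        ι₀3 α β γ (r3ab α β γ (A α β) + r3bc α β γ (A β γ) - r3ac α β γ (A α γ)) y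
          = 2 * Real.pi * Complex.I * n)
    /- ===== the coupled `𝕋`-equivariant line bundle `(ξ, ∇^ξ)` ===== -/
    -- `ξ`-valued forms on `M`, with `∇^ξ`, `ι_K`, `L_K^ξ` and the wedge-by-`H` operator
    (Ω : Type) [AddCommGroup Ω] [Module ℂ Ω]
    (N ι L : Module.End ℂ Ω) (mH : Module.End ℂ Ω)
    -- identification of `ξ`-valued forms over `U_α` with `S α` via the `𝕋`-invariant
    -- local bases `s_α`; the `ρ α` are jointly injective and intertwine `ι_K`, `L_K`
    -- and wedging by `H`
    (ρ : ∀ α, Ω →ₗ[ℂ] S α)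
    (hρ_inj : ∀ x : Ω, (∀ α, ρ α x = 0) → x = 0)
    (hρι : ∀ α (x : Ω), ρ α (ι x) = ιU α (ρ α x))
    (hρL : ∀ α (x : Ω), ρ α (L x) = LU α (ρ α x))
    (hρH : ∀ α (x : Ω), ρ α (mH x) = mU α (resU α H) (ρ α x))
    -- coupling condition (i): in the basis `s_α` the connection 1-form of `∇^ξ` is
    -- `−ι_K B_α`, i.e. `∇^ξ = d − (ι_K B_α) ∧ ·` over `U_α`
    (h_conn : ∀ α (x : Ω), ρ α (N x) = (dU α - mU α (ιU α (B α))) (ρ α x))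
    -- coupling condition (ii): the transition functions of `ξ` are `e^{−ι_K A_{αβ}}`
    (h_trans : ∀ α β (x : Ω),
        rL α β (ρ α x)
          = fmul2 α β (fun p => Complex.exp (-(ι₀2 α β (A α β) p))) (rR α β (ρ β x)))
    /- ===== graded commutation rules for wedging with the odd local forms ===== -/
    -- rules for the 1-form `ι_K B_α`
    (hm1sq : ∀ α, mU α (ιU α (B α)) * mU α (ιU α (B α)) = 0)
    (hm1d : ∀ α, dU α * mU α (ιU α (B α)) + mU α (ιU α (B α)) * dU α
        = mU α (dU α (ιU α (B α))))
    (hm1ι : ∀ α, ιU α * mU α (ιU α (B α)) + mU α (ιU α (B α)) * ιU α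
        = mU α (ιU α (ιU α (B α))))
    -- rules for the 3-form `H|_{U_α}`
    (hm3sq : ∀ α, mU α (resU α H) * mU α (resU α H) = 0)
    (hm3d : ∀ α, dU α * mU α (resU α H) + mU α (resU α H) * dU α
        = mU α (dU α (resU α H)))
    (hm3ι : ∀ α, ιU α * mU α (resU α H) + mU α (resU α H) * ιU α
        = mU α (ιU α (resU α H)))
    -- the two odd forms anticommute
    (hm13 : ∀ α, mU α (ιU α (B α)) * mU α (resU α H)
        + mU α (resU α H) * mU α (ιU α (B α)) = 0) :
    /- ===== conclusion: equivariant flatness of `∇^ξ − u ι_K + u⁻¹ H` ===== -/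
    (C N - C ι * T 1 + C mH * T (-1)) ^ 2 + C L * T 1 = 0 :=
  stmt0_general I SM S dU ιU LU mU resU hd2 hι2U hcartanU H B hHB hBinv Ω N ι L mH ρ hρ_inj hρι hρL
    hρH h_conn hm1sq hm1d hm1ι hm3sq hm3d hm3ι hm13
end

section
/- Let (ξ, ∇^ξ) be a T-equivariant Hermitian line bundle with T-invariant connection on a good T-manifold M with Killing vector field K, and let H be a T-invariant closed 3-form on M such that (∇^ξ − u ι_K + u^{-1} H)^2 + u L_K^ξ = 0. Let π: Sξ → M be the principal U(1)-bundle of ξ and let Θ be the connection 1-form on Sξ corresponding to ∇^ξ. Then ι_K Θ = 0, L_K Θ = 0, and dΘ = ι_K π*H on Sξ. -/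
/-!
The equivariant flatness identity is an identity of Laurent polynomials in `u`; its coefficient
of `u` says that the moment `L_K^ξ − [∇^ξ, ι_K]` of the connection vanishes, and its constant
coefficient says that the curvature `(∇^ξ)²` is `[ι_K, H] = ι_K H`. Pulled back to `Sξ` these give
`ι_K Θ = 0` and `dΘ = ι_K π*H`, and then Cartan's formula gives
`L_K Θ = d ι_K Θ + ι_K dΘ = ι_K ι_K π*H = 0`.
-/

open LaurentPolynomial

section EquivariantCurvature

variable {R : Type*} [Ring R] (a b c d : R)

/-- For `a, b, c, d = ∇^ξ, ι_K, H, L_K^ξ` this is `(∇^ξ − u ι_K + u⁻¹ H)² + u L_K^ξ`, `u = T 1`. -/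
noncomputable def equivariantCurvature : R[T;T⁻¹] :=
  (C a - C b * T 1 + C c * T (-1)) ^ 2 + C d * T 1

theorem equivariantCurvature_coeff_zero :
    (equivariantCurvature a b c d).coeff 0 = a * a - (b * c + c * b) := by
  simp only [equivariantCurvature, ← single_eq_C_mul_T]
  simp only [← single_eq_C, sq, add_mul, sub_mul, mul_add, mul_sub,
    AddMonoidAlgebra.single_mul_single, AddMonoidAlgebra.coeff_add, AddMonoidAlgebra.coeff_sub,
    AddMonoidAlgebra.coeff_single, Finsupp.add_apply, Finsupp.sub_apply, Finsupp.single_apply]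
  norm_num
  abel

theorem equivariantCurvature_coeff_one :
    (equivariantCurvature a b c d).coeff 1 = d - (a * b + b * a) := by
  simp only [equivariantCurvature, ← single_eq_C_mul_T]
  simp only [← single_eq_C, sq, add_mul, sub_mul, mul_add, mul_sub,
    AddMonoidAlgebra.single_mul_single, AddMonoidAlgebra.coeff_add, AddMonoidAlgebra.coeff_sub,
    AddMonoidAlgebra.coeff_single, Finsupp.add_apply, Finsupp.sub_apply, Finsupp.single_apply]
  norm_num
  abel

variable {a b c d}

theorem mul_self_eq_of_equivariantCurvature_eq_zero (h : equivariantCurvature a b c d = 0) :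
    a * a = b * c + c * b := by
  rw [← sub_eq_zero, ← equivariantCurvature_coeff_zero, h, AddMonoidAlgebra.coeff_zero,
    Finsupp.coe_zero, Pi.zero_apply]

theorem eq_mul_add_mul_of_equivariantCurvature_eq_zero (h : equivariantCurvature a b c d = 0) :
    d = a * b + b * a := by
  rw [← sub_eq_zero, ← equivariantCurvature_coeff_one, h, AddMonoidAlgebra.coeff_zero,
    Finsupp.coe_zero, Pi.zero_apply]

end EquivariantCurvature

theorem Module.End.apply_eq_zero_of_cartan {R V : Type*} [Semiring R] [AddCommMonoid V]
    [Module R V] {d ι L : Module.End R V} (cartan : d * ι + ι * d = L) (hι2 : ι * ι = 0)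
    {θ x : V} (hιθ : ι θ = 0) (hdθ : d θ = ι x) : L θ = 0 := by
  rw [← cartan, LinearMap.add_apply, Module.End.mul_apply, Module.End.mul_apply, hιθ, map_zero,
    hdθ, ← Module.End.mul_apply, hι2, zero_add, LinearMap.zero_apply]

theorem stmt3_general
    -- scalar forms on `M`
    (SM : Type) [AddCommGroup SM] [Module ℂ SM]
    (ιM : Module.End ℂ SM)
    -- `ξ`-valued forms on `M`, wedge action, connection, contraction, Lie derivative
    (Ω : Type) [AddCommGroup Ω] [Module ℂ Ω]
    (act : SM →ₗ[ℂ] Module.End ℂ Ω)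
    (N ι L : Module.End ℂ Ω)
    -- the `𝕋`-invariant closed 3-form `H`
    (H : SM)
    -- graded commutation rules on `ξ`-valued forms
    (hιH : ι * act H + act H * ι = act (ιM H))
    -- equivariant flatness `(∇^ξ − u ι_K + u⁻¹ H)² + u L_K^ξ = 0`
    (hflat : (C N - C ι * T 1 + C (act H) * T (-1)) ^ 2 + C L * T 1 = 0)
    -- forms on the circle bundle `Sξ`, with the lifted `K`-operators
    (SP : Type) [AddCommGroup SP] [Module ℂ SP]
    (dP ιPK LPK : Module.End ℂ SP)
    (hιPK2 : ιPK * ιPK = 0)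
    (cartanP : dP * ιPK + ιPK * dP = LPK)
    -- pullback `π*` intertwines the calculi on `M` and on `Sξ`
    (pull : SM →ₗ[ℂ] SP)
    (hpull_ι : ∀ ω : SM, pull (ιM ω) = ιPK (pull ω))
    -- the connection 1-form `Θ` on `Sξ` of `(ξ, ∇^ξ)`:
    (Θ : SP)
    -- its exterior derivative is the pullback of the curvature 2-form of `∇^ξ`
    (hcurv : ∀ F : SM, N * N = act F → dP Θ = pull F)
    -- its contraction with `K` is the pullback of the moment of `∇^ξ` along `K`
    (hmom : ∀ f : SM, L - (N * ι + ι * N) = act f → ιPK Θ = pull f) :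
    -- conclusions: `ι_K Θ = 0`, `L_K Θ = 0`, and `dΘ = ι_K π*H`
    ιPK Θ = 0 ∧ LPK Θ = 0 ∧ dP Θ = ιPK (pull H) := by
  have hmoment : L - (N * ι + ι * N) = act 0 := by
    rw [map_zero, sub_eq_zero]
    exact eq_mul_add_mul_of_equivariantCurvature_eq_zero hflat
  have hcurvature : N * N = act (ιM H) := by
    rw [← hιH]
    exact mul_self_eq_of_equivariantCurvature_eq_zero hflat
  have hιΘ : ιPK Θ = 0 := by rw [hmom 0 hmoment, map_zero]
  have hdΘ : dP Θ = ιPK (pull H) := by rw [hcurv _ hcurvature, hpull_ι]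
  exact ⟨hιΘ, Module.End.apply_eq_zero_of_cartan cartanP hιPK2 hιΘ hdΘ, hdΘ⟩

theorem stmt3
    -- scalar forms on `M`
    (SM : Type) [AddCommGroup SM] [Module ℂ SM]
    (dM ιM LM : Module.End ℂ SM)
    -- `ξ`-valued forms on `M`, wedge action, connection, contraction, Lie derivative
    (Ω : Type) [AddCommGroup Ω] [Module ℂ Ω]
    (act : SM →ₗ[ℂ] Module.End ℂ Ω) (act_inj : Function.Injective act)
    (N ι L : Module.End ℂ Ω)
    -- the `𝕋`-invariant closed 3-form `H`
    (H : SM) (hHcl : dM H = 0) (hHinv : LM H = 0)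
    -- graded commutation rules on `ξ`-valued forms
    (hι2 : ι * ι = 0)
    (hH2 : act H * act H = 0)
    (hdH : N * act H + act H * N = act (dM H))
    (hιH : ι * act H + act H * ι = act (ιM H))
    -- equivariant flatness `(∇^ξ − u ι_K + u⁻¹ H)² + u L_K^ξ = 0`
    (hflat : (C N - C ι * T 1 + C (act H) * T (-1)) ^ 2 + C L * T 1 = 0)
    -- forms on the circle bundle `Sξ`, with the lifted `K`-operators
    (SP : Type) [AddCommGroup SP] [Module ℂ SP]
    (dP ιPK LPK : Module.End ℂ SP)
    (hιPK2 : ιPK * ιPK = 0)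
    (cartanP : dP * ιPK + ιPK * dP = LPK)
    -- pullback `π*` intertwines the calculi on `M` and on `Sξ`
    (pull : SM →ₗ[ℂ] SP)
    (hpull_d : ∀ ω : SM, pull (dM ω) = dP (pull ω))
    (hpull_ι : ∀ ω : SM, pull (ιM ω) = ιPK (pull ω))
    -- the connection 1-form `Θ` on `Sξ` of `(ξ, ∇^ξ)`:
    (Θ : SP)
    -- its exterior derivative is the pullback of the curvature 2-form of `∇^ξ`
    (hcurv : ∀ F : SM, N * N = act F → dP Θ = pull F)
    -- its contraction with `K` is the pullback of the moment of `∇^ξ` along `K`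
    (hmom : ∀ f : SM, L - (N * ι + ι * N) = act f → ιPK Θ = pull f) :
    -- conclusions: `ι_K Θ = 0`, `L_K Θ = 0`, and `dΘ = ι_K π*H`
    ιPK Θ = 0 ∧ LPK Θ = 0 ∧ dP Θ = ιPK (pull H) :=
  stmt3_general SM ιM Ω act N ι L H hιH hflat SP dP ιPK LPK hιPK2 cartanP pull hpull_ι Θ hcurv hmom
end

section
/- In the setting of the circle bundle π: Sξ → M of a T-equivariant Hermitian line bundle (ξ, ∇^ξ) on a good T-manifold M, with H a T-invariant closed 3-form satisfying (∇^ξ − u ι_K + u^{-1} H)^2 + u L_K^ξ = 0, with Θ the connection 1-form and v the vertical Killing vector field, the operator D = d − ι_v − u ι_K + Θ∧ + u^{-1} π*H∧ satisfies the following commutator identities: (1) [D, ι_v] = L_v + ι_v Θ, which vanishes on Ω̃*(Sξ); (2) [D, L_v] = 0; (3) [D, L_K] = 0. -/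
/-!
STATEMENT 5 (Han–Mathai, "Exotic Twisted Equivariant K-Theory").

In the setting of the circle bundle `π : Sξ → M` of a `𝕋`-equivariant Hermitian line bundle
`(ξ, ∇^ξ)` on a good `𝕋`-manifold `M`, with `H` a `𝕋`-invariant closed 3-form satisfying
`(∇^ξ − u ι_K + u⁻¹ H)² + u L_K^ξ = 0`, with `Θ` the connection 1-form and `v` the vertical
Killing vector field, the operator `D = d − ι_v − u ι_K + Θ∧ + u⁻¹ π*H∧` satisfies:
(1) `[D, ι_v] = L_v + ι_v Θ`, which vanishes on `Ω̃*(Sξ) = {ω : ι_v ω = 0, L_v ω = −ω}`;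
(2) `[D, L_v] = 0`;
(3) `[D, L_K] = 0`.

Formalization.  As in the companion formalizations, `S` is the space of complex differential
forms on `Sξ` with exterior derivative `d`, contraction/Lie derivative `ιv, Lv` (resp.
`ιK, LK`) along `v` (resp. the lifted `K`, with `[K, v] = 0`), and wedge multiplication `m`;
`Hp` denotes `π*H`.  The hypotheses record the Cartan calculus rules, the graded Leibniz rules
for wedging with the odd forms `Θ` and `π*H`, and the geometric identities
`ι_v Θ = 1`, `ι_K Θ = 0`, `L_v Θ = 0`, `L_K Θ = 0`, `dΘ = ι_K π*H`, `d π*H = 0`, `ι_v π*H = 0`,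
`L_v π*H = 0`, `L_K π*H = 0` used in the paper.  `D` is an element of the Laurent polynomials
in the degree-2 indeterminate `u` (the variable `T 1`) with operator coefficients.  Since `D`
is odd and `ι_v` is odd, the graded commutator in (1) is `[D, ι_v] = D ι_v + ι_v D`; since
`L_v`, `L_K` are even, the commutators in (2), (3) are `D L_v − L_v D` and `D L_K − L_K D`.
-/

open LaurentPolynomial

theorem stmt5
    -- `S`: the complex differential forms on `Sξ`
    (S : Type) [AddCommGroup S] [Module ℂ S]
    -- exterior derivative, and contraction/Lie derivative along `v` and along `K`
    (d ιv Lv ιK LK : Module.End ℂ S)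
    -- wedge multiplication by differential forms
    (m : S →ₗ[ℂ] Module.End ℂ S)
    -- the connection 1-form `Θ` and the pullback `π*H` of the 3-form `H`
    (Θ Hp : S)
    -- Cartan calculus
    (hd2 : d * d = 0)
    (cartan_v : d * ιv + ιv * d = Lv)
    (cartan_K : d * ιK + ιK * d = LK)
    (hιv2 : ιv * ιv = 0)
    (hιK2 : ιK * ιK = 0)
    (hanti : ιv * ιK + ιK * ιv = 0)     -- contractions anticommute
    (hLvιv : Lv * ιv = ιv * Lv)
    (hLKιK : LK * ιK = ιK * LK)
    -- `[K, v] = 0`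
    (hLvιK : Lv * ιK = ιK * Lv)
    (hLKιv : LK * ιv = ιv * LK)
    (hLvLK : Lv * LK = LK * Lv)
    -- wedging with the odd forms `Θ` and `π*H`: squares and graded Leibniz rules
    (hΘ2 : m Θ * m Θ = 0)
    (hH2 : m Hp * m Hp = 0)
    (hΘH : m Θ * m Hp + m Hp * m Θ = 0)
    (hdΘ : d * m Θ + m Θ * d = m (d Θ))
    (hdH : d * m Hp + m Hp * d = m (d Hp))
    (hιvΘ : ιv * m Θ + m Θ * ιv = m (ιv Θ))
    (hιKΘ : ιK * m Θ + m Θ * ιK = m (ιK Θ))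
    (hιvH : ιv * m Hp + m Hp * ιv = m (ιv Hp))
    (hιKH : ιK * m Hp + m Hp * ιK = m (ιK Hp))
    (hLvΘ : Lv * m Θ - m Θ * Lv = m (Lv Θ))
    (hLKΘ : LK * m Θ - m Θ * LK = m (LK Θ))
    (hLvH : Lv * m Hp - m Hp * Lv = m (Lv Hp))
    (hLKH : LK * m Hp - m Hp * LK = m (LK Hp))
    -- geometric facts about `Θ` and `π*H` in this setting
    (hιvΘ1 : m (ιv Θ) = 1)          -- `ι_v Θ = 1`
    (hιKΘ0 : ιK Θ = 0)               -- `ι_K Θ = 0`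
    (hLvΘ0 : Lv Θ = 0)               -- `L_v Θ = 0`
    (hLKΘ0 : LK Θ = 0)               -- `L_K Θ = 0`
    (hcurv : d Θ = ιK Hp)            -- `dΘ = ι_K π*H`
    (hHcl : d Hp = 0)                -- `π*H` is closed
    (hιvH0 : ιv Hp = 0)              -- `ι_v π*H = 0`
    (hLvH0 : Lv Hp = 0)              -- `L_v π*H = 0`
    (hLKH0 : LK Hp = 0) :            -- `L_K π*H = 0`
    -- (1) `[D, ι_v] = L_v + ι_v Θ ∧ ·`, which vanishes on `Ω̃*(Sξ)`
    (((C d - C ιv - C ιK * T 1 + C (m Θ) + C (m Hp) * T (-1)) * C ιv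
        + C ιv * (C d - C ιv - C ιK * T 1 + C (m Θ) + C (m Hp) * T (-1))
        = C (Lv + m (ιv Θ)))
      ∧ (∀ ω : S, ιv ω = 0 → Lv ω = -ω → (Lv + m (ιv Θ)) ω = 0))
    ∧
    -- (2) `[D, L_v] = 0`
    ((C d - C ιv - C ιK * T 1 + C (m Θ) + C (m Hp) * T (-1)) * C Lv
        = C Lv * (C d - C ιv - C ιK * T 1 + C (m Θ) + C (m Hp) * T (-1)))
    ∧
    -- (3) `[D, L_K] = 0`
    ((C d - C ιv - C ιK * T 1 + C (m Θ) + C (m Hp) * T (-1)) * C LK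
        = C LK * (C d - C ιv - C ιK * T 1 + C (m Θ) + C (m Hp) * T (-1))) := by

  classical
  -- abbreviations
  have hsw : ∀ (x y : Module.End ℂ S) (n : ℤ),
      (C x : (Module.End ℂ S)[T;T⁻¹]) * T n * C y = C (x * y) * T n := by
    intro x y n; rw [mul_assoc, T_mul, ← mul_assoc, ← map_mul]
  have hsw2 : ∀ (x y : Module.End ℂ S) (n : ℤ),
      (C x : (Module.End ℂ S)[T;T⁻¹]) * (C y * T n) = C (x * y) * T n := by
    intro x y n; rw [← mul_assoc, ← map_mul]
  have comm : ∀ a b : Module.End ℂ S, a * b = b * a →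
      Commute (C a : (Module.End ℂ S)[T;T⁻¹]) (C b) := by
    intro a b h
    unfold Commute SemiconjBy
    rw [← map_mul, ← map_mul, h]
  have cT : ∀ (n : ℤ) (b : Module.End ℂ S),
      Commute (T n : (Module.End ℂ S)[T;T⁻¹]) (C b) := by
    intro n b; exact T_mul n (C b)
  -- End-level commutation facts
  have hdLv : d * Lv = Lv * d := by
    have h : d * (d * ιv + ιv * d) = (d * ιv + ιv * d) * d := by
      rw [mul_add, add_mul, ← mul_assoc d d ιv, hd2, zero_mul, zero_add,
        mul_assoc ιv d d, hd2, mul_zero, add_zero, mul_assoc]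
    rwa [cartan_v] at h
  have hdLK : d * LK = LK * d := by
    have h : d * (d * ιK + ιK * d) = (d * ιK + ιK * d) * d := by
      rw [mul_add, add_mul, ← mul_assoc d d ιK, hd2, zero_mul, zero_add,
        mul_assoc ιK d d, hd2, mul_zero, add_zero, mul_assoc]
    rwa [cartan_K] at h
  have hΘLv : m Θ * Lv = Lv * m Θ := by
    have := hLvΘ; rw [hLvΘ0, map_zero, sub_eq_zero] at this; exact this.symm
  have hHLv : m Hp * Lv = Lv * m Hp := by
    have := hLvH; rw [hLvH0, map_zero, sub_eq_zero] at this; exact this.symm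
  have hΘLK : m Θ * LK = LK * m Θ := by
    have := hLKΘ; rw [hLKΘ0, map_zero, sub_eq_zero] at this; exact this.symm
  have hHLK : m Hp * LK = LK * m Hp := by
    have := hLKH; rw [hLKH0, map_zero, sub_eq_zero] at this; exact this.symm
  refine ⟨⟨?_, ?_⟩, ?_, ?_⟩
  · -- (1) the anticommutator identity
    have h1 : ιK * ιv = -(ιv * ιK) := eq_neg_of_add_eq_zero_right hanti
    have h2 : ιv * d = Lv - d * ιv := by rw [← cartan_v]; abel
    have h3 : ιv * m Θ = m (ιv Θ) - m Θ * ιv := by rw [← hιvΘ]; abel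
    have h4 : m Hp * ιv = -(ιv * m Hp) := by
      have := hιvH; rw [hιvH0, map_zero] at this
      exact eq_neg_of_add_eq_zero_right this
    have hC0 : (C (ιv * ιv) : (Module.End ℂ S)[T;T⁻¹]) = 0 := by
      rw [hιv2]; exact map_zero C
    have hC1 : (C (ιK * ιv) : (Module.End ℂ S)[T;T⁻¹]) * T 1
        = 0 - C (ιv * ιK) * T 1 := by
      rw [show ιK * ιv = 0 - ιv * ιK by rw [zero_sub]; exact h1,
        map_sub, map_zero, sub_mul, zero_mul]
    have hC2 : (C (ιv * d) : (Module.End ℂ S)[T;T⁻¹]) = C Lv - C (d * ιv) := by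
      rw [h2]; exact map_sub C _ _
    have hC3 : (C (ιv * m Θ) : (Module.End ℂ S)[T;T⁻¹])
        = C (m (ιv Θ)) - C (m Θ * ιv) := by
      rw [h3]; exact map_sub C _ _
    have hC4 : (C (m Hp * ιv) : (Module.End ℂ S)[T;T⁻¹]) * T (-1)
        = 0 - C (ιv * m Hp) * T (-1) := by
      rw [show m Hp * ιv = 0 - ιv * m Hp by rw [zero_sub]; exact h4,
        map_sub, map_zero, sub_mul, zero_mul]
    have hC5 : (C (Lv + m (ιv Θ)) : (Module.End ℂ S)[T;T⁻¹]) = C Lv + C 1 := by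
      rw [map_add, hιvΘ1]
    simp only [sub_mul, add_mul, mul_sub, mul_add, hsw, hsw2, ← map_mul]
    rw [hC0, hC1, hC2, hC3, hC4, hC5, hιvΘ1]
    abel
  · -- vanishing on Ω̃*(Sξ)
    intro ω h0 h1
    rw [LinearMap.add_apply, h1, hιvΘ1, Module.End.one_apply, neg_add_cancel]
  · -- (2) [D, Lv] = 0
    exact ((((comm d Lv hdLv).sub_left (comm ιv Lv hLvιv.symm)).sub_left
      ((comm ιK Lv hLvιK.symm).mul_left (cT 1 Lv))).add_left
      (comm (m Θ) Lv hΘLv)).add_left ((comm (m Hp) Lv hHLv).mul_left (cT (-1) Lv))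
  · -- (3) [D, LK] = 0
    exact ((((comm d LK hdLK).sub_left (comm ιv LK hLKιv.symm)).sub_left
      ((comm ιK LK hLKιK.symm).mul_left (cT 1 LK))).add_left
      (comm (m Θ) LK hΘLK)).add_left ((comm (m Hp) LK hHLK).mul_left (cT (-1) LK))
end

section
/- Let T → Z →^π X be a principal circle bundle with T-invariant connection Θ and T-invariant closed 3-form H, with T-dual circle bundle T̂ → Ẑ →^π̂ X with connection Θ̂ and flux Ĥ, satisfying the T-duality relations e^{−ι_v A_{αβ}} = ĝ_{αβ}, −ι_v B_α = η̂_α, ι_v H = F^{Θ̂} (and dually with hats exchanged), where ({π^{-1}(U_α)}, H, B_α, A_{αβ}) is a gerbe on Z with T-invariant B_α, A_{αβ}, and v is the Killing vector field on Z. Then: (1) ({π^{-1}(U_α)}, H, B_α, A_{αβ}) is a weak T-invariant gerbe on the good T-manifold Z; and (2) the T-equivariant line bundle (π*ξ̂, π*∇^{ξ̂}), where (ξ̂, ∇^{ξ̂}) is the line bundle on X associated to (Ẑ, Θ̂) via the standard representation, is coupled to this gerbe on Z. -/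
open Set in
private lemma int_valued_const {Y : Type} [TopologicalSpace Y] {K : Set Y}
    (hK : IsPreconnected K) {g : Y → ℝ} (hg : Continuous g)
    (hints : ∀ z, ∃ k : ℤ, g z = k) {a b : Y} (ha : a ∈ K) (hb : b ∈ K) :
    g a = g b := by
  wlog hab : g a ≤ g b generalizing a b
  · exact (this hb ha (le_of_not_ge hab)).symm
  obtain ⟨p, hp⟩ := hints a
  obtain ⟨q, hq⟩ := hints b
  rcases eq_or_lt_of_le hab with h | h
  · exact h
  have hpq : p < q := by rw [hp, hq] at h; exact_mod_cast h
  have ht : ((p : ℝ) + 1/2) ∈ Set.Icc (g a) (g b) := by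
    constructor
    · rw [hp]; linarith
    · rw [hq]
      have : (p : ℝ) + 1 ≤ q := by exact_mod_cast hpq
      linarith
  obtain ⟨z, _, hz'⟩ := hK.intermediate_value ha hb hg.continuousOn ht
  obtain ⟨k, hk⟩ := hints z
  rw [hk] at hz'
  have h2 : (2:ℝ) * k = 2 * p + 1 := by linarith
  have h3 : 2 * k = 2 * p + 1 := by exact_mod_cast h2
  omega


/-!
STATEMENT 12 (Han–Mathai, "Exotic Twisted Equivariant K-Theory", Example 2).

Let `𝕋 → Z →^π X` be a principal circle bundle with `𝕋`-invariant connection `Θ` and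
`𝕋`-invariant closed 3-form `H`, with T-dual circle bundle `𝕋̂ → Ẑ →^π̂ X` with connection
`Θ̂` and flux `Ĥ`, satisfying the T-duality relations
`e^{−ι_v A_{αβ}} = ĝ_{αβ}`, `−ι_v B_α = η̂_α`, `ι_v H = F^{Θ̂}` (and dually with hats
exchanged), where `({π⁻¹(U_α)}, H, B_α, A_{αβ})` is a gerbe on `Z` with `𝕋`-invariant
`B_α, A_{αβ}`, and `v` is the Killing vector field on `Z`.  Then:
(1) `({π⁻¹(U_α)}, H, B_α, A_{αβ})` is a weak `𝕋`-invariant gerbe on the good `𝕋`-manifold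
`Z`; and
(2) the `𝕋`-equivariant line bundle `(π*ξ̂, π*∇^{ξ̂})`, where `(ξ̂, ∇^{ξ̂})` is the line
bundle on `X` associated to `(Ẑ, Θ̂)` via the standard representation, is coupled to this
gerbe on `Z`.

Formalization.  `I` indexes the good cover `{U_α}` of `X`, so `{π⁻¹(U_α)}` makes `Z` a good
`𝕋`-manifold.  `SZ` are the forms on `Z` (Cartan operators `dZ, ιZ, LZ` along `v`), `SU α`,
`S2 α β`, `S3 α β γ` the forms on `π⁻¹(U_α)`, `π⁻¹(U_{αβ})`, `π⁻¹(U_{αβγ})`; `SX α` the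
forms on `U_α ⊆ X` and `SXM` the forms on `X`, with the pullbacks `pM, pU`.  On double and
triple overlaps of `Z` we use the points `P2 α β`, `P3 α β γ` (with point-level restrictions
`q2ab, q2bc, q2ac` from triple to double overlaps), the contraction-to-function maps
`ι₀2, ι₀3` (values of `ι_v` on 1-forms, continuous functions), the function-multiplication
maps `fmul2, fmul3`, and `df3`, to express the `U(1)`-cocycle data.  `PX2 α β` are the points
of `U_{αβ} ⊆ X` and `πpt` the point map of `π`.  The transition functions `ĝ_{αβ}` of the
dual bundle `Ẑ` form a `U(1)`-valued cocycle; `η̂ α` are the local connection 1-forms of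
`Θ̂`, and `FΘ̂` its curvature 2-form on `X`.  The associated line bundle `ξ̂` of `(Ẑ, Θ̂)`
has local connection 1-forms `η̂ α` and transition functions `ĝ_{αβ}`; hence, in the
pulled-back `𝕋`-invariant local bases, the pullback bundle `(π*ξ̂, π*∇^{ξ̂})` — whose
`ξ̂`-valued forms on `Z` are `Ω`, with connection `N = π*∇^{ξ̂}` and local identifications
`ρ α` — has connection 1-forms `π*η̂_α` and transition functions `ĝ_{αβ} ∘ π` (hypotheses
`h_conn_pull` and `h_trans_pull`).  Conclusion (1) is the remaining weak `𝕋`-invariance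
condition (`𝕋`-invariance of the data being among the hypotheses); conclusion (2) is the
coupling condition of Definition: the connection 1-form is `−ι_v B_α` and the transition
functions are `e^{−ι_v A_{αβ}}`.
-/

theorem stmt12
    (I : Type)
    -- forms on `Z` and on the pieces of the invariant cover of `Z`
    (SZ : Type) [AddCommGroup SZ] [Module ℂ SZ]
    (dZ ιZ LZ : Module.End ℂ SZ)
    (SU : I → Type) [∀ α, AddCommGroup (SU α)] [∀ α, Module ℂ (SU α)]
    (dU ιU LU : ∀ α, Module.End ℂ (SU α))
    (S2 : I → I → Type) [∀ α β, AddCommGroup (S2 α β)] [∀ α β, Module ℂ (S2 α β)]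
    (d2 ι2 L2 : ∀ α β, Module.End ℂ (S2 α β))
    (S3 : I → I → I → Type) [∀ α β γ, AddCommGroup (S3 α β γ)]
    [∀ α β γ, Module ℂ (S3 α β γ)]
    -- forms on `X` and on the `U_α`, with the pullbacks along `π`
    (SXM : Type) [AddCommGroup SXM] [Module ℂ SXM]
    (SX : I → Type) [∀ α, AddCommGroup (SX α)] [∀ α, Module ℂ (SX α)]
    (pM : SXM →ₗ[ℂ] SZ) (pU : ∀ α, SX α →ₗ[ℂ] SU α)
    -- wedge multiplication over `π⁻¹(U_α)`
    (mU : ∀ α, SU α →ₗ[ℂ] Module.End ℂ (SU α))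
    -- restrictions of forms
    (resU : ∀ α, SZ →ₗ[ℂ] SU α)
    (rL : ∀ α β, SU α →ₗ[ℂ] S2 α β) (rR : ∀ α β, SU β →ₗ[ℂ] S2 α β)
    (r3ab : ∀ α β γ, S2 α β →ₗ[ℂ] S3 α β γ)
    (r3bc : ∀ α β γ, S2 β γ →ₗ[ℂ] S3 α β γ)
    (r3ac : ∀ α β γ, S2 α γ →ₗ[ℂ] S3 α β γ)
    -- points of double/triple overlaps in `Z` and of double overlaps in `X`
    (P2 : I → I → Type) (P3 : I → I → I → Type) [∀ α β γ, TopologicalSpace (P3 α β γ)]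
    (PX2 : I → I → Type)
    (q2ab : ∀ α β γ, P3 α β γ → P2 α β)
    (q2bc : ∀ α β γ, P3 α β γ → P2 β γ)
    (q2ac : ∀ α β γ, P3 α β γ → P2 α γ)
    (πpt : ∀ α β, P2 α β → PX2 α β)
    -- function-level operations (`ι₀` = contraction `ι_v` of a 1-form, as a function)
    (ι₀2 : ∀ α β, S2 α β →ₗ[ℂ] (P2 α β → ℂ))
    (ι₀3 : ∀ α β γ, S3 α β γ →ₗ[ℂ] (P3 α β γ → ℂ))
    (df3 : ∀ α β γ, (P3 α β γ → ℂ) →ₗ[ℂ] S3 α β γ)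
    (fmul2 : ∀ α β, (P2 α β → ℂ) → S2 α β → S2 α β)
    (fmul3 : ∀ α β γ, (P3 α β γ → ℂ) → S3 α β γ → S3 α β γ)
    -- contractions of (smooth) 1-forms are continuous functions
    (hι₀3cont : ∀ α β γ (ω : S3 α β γ), Continuous (ι₀3 α β γ ω))
    -- compatibility of `ι_v` with restriction from double to triple overlaps
    (hrestr_ab : ∀ α β γ (ω : S2 α β) (x : P3 α β γ),
        ι₀3 α β γ (r3ab α β γ ω) x = ι₀2 α β ω (q2ab α β γ x))
    (hrestr_bc : ∀ α β γ (ω : S2 β γ) (x : P3 α β γ),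
        ι₀3 α β γ (r3bc α β γ ω) x = ι₀2 β γ ω (q2bc α β γ x))
    (hrestr_ac : ∀ α β γ (ω : S2 α γ) (x : P3 α β γ),
        ι₀3 α β γ (r3ac α β γ ω) x = ι₀2 α γ ω (q2ac α β γ x))
    /- ===== the gerbe `({π⁻¹(U_α)}, H, B_α, A_{αβ})` on `Z` ===== -/
    (H : SZ) (B : ∀ α, SU α) (A : ∀ α β, S2 α β) (Cf : ∀ α β γ, P3 α β γ → ℂ)
    (IP : SZ → Prop) (hIP : IP H)      -- `(1/2πi)H` has integral periods
    (hHB : ∀ α, resU α H = dU α (B α))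
    (hBA : ∀ α β, rL α β (B α) - rR α β (B β) = d2 α β (A α β))
    (hCnorm : ∀ α β γ (x : P3 α β γ), ‖Cf α β γ x‖ = 1)
    (hdlnC : ∀ α β γ, fmul3 α β γ (Cf α β γ)
        (r3ab α β γ (A α β) + r3bc α β γ (A β γ) - r3ac α β γ (A α γ))
      = df3 α β γ (Cf α β γ))
    -- `H` is `𝕋`-invariant, and `B_α, A_{αβ}` are chosen `𝕋`-invariant
    (hHinv : LZ H = 0)
    (hBinv : ∀ α, LU α (B α) = 0)
    (hAinv : ∀ α β, L2 α β (A α β) = 0)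
    /- ===== the T-duality data ===== -/
    -- the transition functions `ĝ_{αβ}` of the dual bundle `Ẑ`: a `U(1)`-valued cocycle
    (gd : ∀ α β, PX2 α β → ℂ)
    (gd_norm : ∀ α β (x : PX2 α β), ‖gd α β x‖ = 1)
    (gd_cocycle : ∀ α β γ (x : P3 α β γ),
        gd α β (πpt α β (q2ab α β γ x)) * gd β γ (πpt β γ (q2bc α β γ x))
          = gd α γ (πpt α γ (q2ac α β γ x)))
    -- the local connection 1-forms `η̂_α` of `Θ̂` and the curvature `F^{Θ̂}` on `X`
    (ηd : ∀ α, SX α) (FTd : SXM)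
    -- T-duality relations: `e^{−ι_v A_{αβ}} = ĝ_{αβ}`, `−ι_v B_α = η̂_α`, `ι_v H = F^{Θ̂}`
    (hrel1 : ∀ α β (p : P2 α β),
        Complex.exp (-(ι₀2 α β (A α β) p)) = gd α β (πpt α β p))
    (hrel2 : ∀ α, ιU α (B α) = -(pU α (ηd α)))
    (hrel3 : ιZ H = pM FTd)
    /- ===== the pullback bundle `(π*ξ̂, π*∇^{ξ̂})` on `Z` ===== -/
    -- `ξ̂`-valued forms on `Z`, with the pullback connection `N = π*∇^{ξ̂}` and the local
    -- identifications `ρ α` given by the pulled-back `𝕋`-invariant local bases of `ξ̂`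
    (Ω : Type) [AddCommGroup Ω] [Module ℂ Ω]
    (N : Module.End ℂ Ω)
    (ρ : ∀ α, Ω →ₗ[ℂ] SU α)
    -- in these bases, the connection 1-form of `π*∇^{ξ̂}` is `π*η̂_α` ...
    (h_conn_pull : ∀ α (x : Ω), ρ α (N x) = (dU α + mU α (pU α (ηd α))) (ρ α x))
    -- ... and the transition functions of `π*ξ̂` are `ĝ_{αβ} ∘ π`
    (h_trans_pull : ∀ α β (x : Ω),
        rL α β (ρ α x) = fmul2 α β (fun p => gd α β (πpt α β p)) (rR α β (ρ β x)))
    -- multiplication by a function only depends on the values of the function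
    (hfmul2_congr : ∀ α β (f g : P2 α β → ℂ), (∀ p, f p = g p) →
        ∀ ω : S2 α β, fmul2 α β f ω = fmul2 α β g ω) :
    /- ===== conclusion (1): the gerbe is a weak `𝕋`-invariant gerbe on `Z` ===== -/
    -- (the data being `𝕋`-invariant, what remains is the `2πi·ℤ` condition on each
    --  connected component of the triple overlaps)
    (∀ α β γ (x : P3 α β γ), ∃ n : ℤ, ∀ y ∈ connectedComponent x,
        ι₀3 α β γ (r3ab α β γ (A α β) + r3bc α β γ (A β γ) - r3ac α β γ (A α γ)) y
          = 2 * Real.pi * Complex.I * n)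
    /- ===== conclusion (2): `(π*ξ̂, π*∇^{ξ̂})` is coupled to the gerbe on `Z` ===== -/
    ∧ (∀ α (x : Ω), ρ α (N x) = (dU α - mU α (ιU α (B α))) (ρ α x))
    ∧ (∀ α β (x : Ω),
        rL α β (ρ α x)
          = fmul2 α β (fun p => Complex.exp (-(ι₀2 α β (A α β) p))) (rR α β (ρ β x))) := by
  refine ⟨?_, ?_, ?_⟩
  · intro α β γ x
    set f : P3 α β γ → ℂ :=
      ι₀3 α β γ (r3ab α β γ (A α β) + r3bc α β γ (A β γ) - r3ac α β γ (A α γ)) with hfdef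
    have hfc : Continuous f := hι₀3cont _ _ _ _
    have hval : ∀ y, ∃ n : ℤ, f y = 2 * Real.pi * Complex.I * n := by
      intro y
      have hsplit : f y = ι₀2 α β (A α β) (q2ab α β γ y) + ι₀2 β γ (A β γ) (q2bc α β γ y)
          - ι₀2 α γ (A α γ) (q2ac α β γ y) := by
        simp only [hfdef, map_add, map_sub, Pi.add_apply, Pi.sub_apply,
          hrestr_ab, hrestr_bc, hrestr_ac]
      have hac : gd α γ (πpt α γ (q2ac α β γ y)) ≠ 0 := by
        intro h0
        have := gd_norm α γ (πpt α γ (q2ac α β γ y))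
        rw [h0] at this; simp at this
      have hexp : Complex.exp (-(f y)) = 1 := by
        have h1 : -(f y) = -(ι₀2 α β (A α β) (q2ab α β γ y))
            + -(ι₀2 β γ (A β γ) (q2bc α β γ y)) + ι₀2 α γ (A α γ) (q2ac α β γ y) := by
          rw [hsplit]; ring
        rw [h1, Complex.exp_add, Complex.exp_add, hrel1, hrel1]
        have h2 : Complex.exp (ι₀2 α γ (A α γ) (q2ac α β γ y))
            = (gd α γ (πpt α γ (q2ac α β γ y)))⁻¹ := by
          rw [← hrel1 α γ, ← Complex.exp_neg, neg_neg]
        rw [h2, gd_cocycle]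
        exact mul_inv_cancel₀ hac
      rw [Complex.exp_eq_one_iff] at hexp
      obtain ⟨n, hn⟩ := hexp
      refine ⟨-n, ?_⟩
      have : f y = -(n * (2 * Real.pi * Complex.I)) := by rw [← hn]; ring
      rw [this]; push_cast; ring
    obtain ⟨m, hm⟩ := hval x
    refine ⟨m, fun y hy => ?_⟩
    obtain ⟨n, hn⟩ := hval y
    have him : ∀ z, ∀ k : ℤ, f z = 2 * Real.pi * Complex.I * k → (f z).im = 2 * Real.pi * k := by
      intro z k hk
      rw [hk]; simp [Complex.mul_im]
    set g : P3 α β γ → ℝ := fun z => (f z).im / (2 * Real.pi) with hgdef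
    have hgc : Continuous g := (Complex.continuous_im.comp hfc).div_const _
    have h2pi : (2 : ℝ) * Real.pi ≠ 0 := by positivity
    have hints : ∀ z, ∃ k : ℤ, g z = k := by
      intro z
      obtain ⟨k, hk⟩ := hval z
      exact ⟨k, by rw [hgdef]; simp only; rw [him z k hk]; field_simp⟩
    have hgy : g y = g x :=
      int_valued_const isPreconnected_connectedComponent hgc hints hy
        (mem_connectedComponent)
    have : (n : ℝ) = (m : ℝ) := by
      have h1 : g y = n := by rw [hgdef]; simp only; rw [him y n hn]; field_simp
      have h2 : g x = m := by rw [hgdef]; simp only; rw [him x m hm]; field_simp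
      rw [h1, h2] at hgy; exact hgy
    have hnm : n = m := by exact_mod_cast this
    show f y = _
    rw [hn, hnm]
  · intro α x
    rw [h_conn_pull α x, hrel2 α]
    simp [LinearMap.sub_apply, LinearMap.add_apply, map_neg, sub_neg_eq_add]
  · intro α β x
    rw [h_trans_pull]
    exact hfmul2_congr α β _ _ (fun p => (hrel1 α β p).symm) _
end
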